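/- arXiv:math/0212305 — 2 statements merged into one kernel-verified Lean document; each statement's English description precedes it below -/
import Mathlib

section
/- Let n ≥ 1 and let w : Fin n → ℝ be weights assigned to the arcs of a cycle of length n (indices taken cyclically, i.e., modulo n). If the total weight W = ∑_{i} w(i) is negative, then there exists a starting index i' such that every cyclic partial sum starting at i' is negative: for every m with 0 ≤ m ≤ n−1, ∑_{j=0}^{m} w(i' + j) < 0, where the index i' + j is taken modulo n. -/
/-- **Theorem 3.1.** If the total weight of the `n` arcs of a cycle is negative,
then there is a starting index `i'` such that every cyclic partial sum starting
at `i'` (indices taken modulo `n`) is negative. -/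
theorem cyclic_partial_sums_neg (n : ℕ) (hn : 1 ≤ n) (w : Fin n → ℝ)
    (hW : ∑ i, w i < 0) :
    ∃ i' : Fin n, ∀ m : ℕ, m ≤ n - 1 →
      ∑ j ∈ Finset.range (m + 1), w ⟨((i' : ℕ) + j) % n, Nat.mod_lt _ hn⟩ < 0 := by
  set v : ℕ → ℝ := fun j => w ⟨j % n, Nat.mod_lt _ hn⟩ with hv
  set S : ℕ → ℝ := fun k => ∑ j ∈ Finset.range k, v j with hS
  -- total weight
  have hWn : S n = ∑ i, w i := by
    show ∑ j ∈ Finset.range n, v j = _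
    rw [Finset.sum_range]
    exact Finset.sum_congr rfl fun i _ =>
      congrArg w (Fin.ext (by simp [Nat.mod_eq_of_lt i.isLt]))
  have hWneg : S n < 0 := hWn ▸ hW
  -- shift formula
  have hshift : ∀ i m : ℕ, ∑ j ∈ Finset.range m, v (i + j) = S (i + m) - S i := by
    intro i m
    rw [hS]
    simp only
    rw [Finset.sum_range_add]
    ring
  -- periodicity
  have hper : ∀ r : ℕ, S (n + r) = S n + S r := by
    intro r
    have : ∀ j : ℕ, v (n + j) = v j := by
      intro j
      simp [v, Nat.add_mod_left]
    rw [hS]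
    simp only
    rw [Finset.sum_range_add]
    congr 1
    exact Finset.sum_congr rfl fun j _ => this j
  -- choose largest argmax of S over range n
  have hne : (Finset.range n).Nonempty := ⟨0, Finset.mem_range.2 hn⟩
  obtain ⟨i₀, hi₀mem, hi₀⟩ := Finset.exists_max_image (Finset.range n) S hne
  set A : Finset ℕ := (Finset.range n).filter (fun i => ∀ j ∈ Finset.range n, S j ≤ S i)
    with hA
  have hAne : A.Nonempty := ⟨i₀, Finset.mem_filter.2 ⟨hi₀mem, hi₀⟩⟩
  set i' : ℕ := A.max' hAne with hi'
  have hi'A : i' ∈ A := A.max'_mem hAne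
  have hi'n : i' < n := Finset.mem_range.1 (Finset.mem_filter.1 hi'A).1
  have hi'max : ∀ j ∈ Finset.range n, S j ≤ S i' := (Finset.mem_filter.1 hi'A).2
  have hstrict : ∀ k, i' < k → k < n → S k < S i' := by
    intro k hk hkn
    rcases lt_or_eq_of_le (hi'max k (Finset.mem_range.2 hkn)) with h | h
    · exact h
    · exfalso
      have hkA : k ∈ A := Finset.mem_filter.2 ⟨Finset.mem_range.2 hkn,
        fun j hj => (hi'max j hj).trans h.ge⟩
      exact absurd (A.le_max' k hkA) (not_le.2 hk)
  have hS0 : (0:ℝ) ≤ S i' := by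
    have := hi'max 0 (Finset.mem_range.2 hn)
    simpa [hS] using this
  refine ⟨⟨i', hi'n⟩, ?_⟩
  intro m hm
  have hsum : ∑ j ∈ Finset.range (m + 1), w ⟨(i' + j) % n, Nat.mod_lt _ hn⟩
      = S (i' + (m + 1)) - S i' := hshift i' (m + 1)
  rw [hsum]
  have hm1 : m + 1 ≤ n := by omega
  rcases le_or_gt (i' + (m + 1)) n with hle | hgt
  · rcases lt_or_eq_of_le hle with h | h
    · have := hstrict (i' + (m + 1)) (by omega) h
      linarith
    · rw [h]; linarith
  · -- wrap around: i' + (m+1) = n + r with 1 ≤ r ≤ i'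
    set r : ℕ := i' + (m + 1) - n with hr
    have hrn : i' + (m + 1) = n + r := by omega
    have hri' : r ≤ i' := by omega
    have hSr : S r ≤ S i' := hi'max r (Finset.mem_range.2 (by omega))
    rw [hrn, hper r]
    linarith
end

section
/- Correctness of the Floyd–Warshall algorithm: Let n ≥ 1 and let M : Fin n → Fin n → ℝ be an arc-cost matrix on the complete directed graph with vertex set Fin n. Define the Floyd–Warshall matrices F : ℕ → Fin n → Fin n → ℝ by F 0 = M and, for j < n, F (j+1) i k = min (F j i k) (F j i v_j + F j v_j k), where v_j is the vertex of index j. Assume M contains no negative cycle, i.e., for every nonempty list of distinct vertices c_0, c_1, …, c_{m−1}, the cyclic cost ∑_{t=0}^{m−1} M c_t c_{(t+1) mod m} is nonnegative. Then for every j ≤ n and all vertices i, k with i ≠ k, F j i k equals the minimum, over all simple paths from i to k whose intermediate vertices all have index strictly less than j, of the total cost of the path (the cost of a path i = p_0, p_1, …, p_ℓ = k being ∑_{t=0}^{ℓ−1} M p_t p_{t+1}). -/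
/-!
After the pivots `0, …, j - 1` have been processed, every entry `F j i k` is the cost of some
walk from `i` to `k` through vertices of index `< j`, and is at most the cost of every simple
path from `i` to `k` through such vertices. A triangle operation at a pivot `v` preserves both
facts: a walk through `v` is the concatenation of two walks, and a simple path through `v` splits
at `v` into two simple paths avoiding `v`. The absence of negative cycles is needed only at the
end: it makes every closed walk nonnegative, so loops can be cut out of the walk realising
`F j i k`, leaving a simple path of no larger cost.
-/

namespace FloydWarshall

section Cost

variable {α R : Type*} [AddCommMonoid R] (M : α → α → R)

def cost (w : List α) : R := (List.zipWith M w w.tail).sum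

@[simp] theorem cost_nil : cost M [] = 0 := rfl

@[simp] theorem cost_singleton (a : α) : cost M [a] = 0 := rfl

@[simp] theorem cost_cons_cons (a b : α) (t : List α) :
    cost M (a :: b :: t) = M a b + cost M (b :: t) := by
  simp [cost]

theorem cost_append_cons (s t : List α) (u : α) :
    cost M (s ++ u :: t) = cost M (s ++ [u]) + cost M (u :: t) := by
  induction s with
  | nil => simp
  | cons a s ih =>
    cases s with
    | nil => simp
    | cons b s => simp only [List.cons_append, cost_cons_cons] at ih ⊢; rw [ih, add_assoc]

theorem cost_cons_append_cons_append (i v k : α) (q₁ q₂ : List α) :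
    cost M (i :: ((q₁ ++ v :: q₂) ++ [k])) =
      cost M (i :: (q₁ ++ [v])) + cost M (v :: (q₂ ++ [k])) := by
  simpa using cost_append_cons M (i :: q₁) (q₂ ++ [k]) v

theorem cost_remove_loop (x s z : List α) (d : α) :
    cost M (x ++ d :: (s ++ d :: z)) = cost M (x ++ d :: z) + cost M (d :: (s ++ [d])) := by
  have hloop := cost_append_cons M (d :: s) z d
  simp only [List.cons_append] at hloop
  rw [cost_append_cons, hloop, cost_append_cons M x z, add_right_comm, add_assoc]

theorem cost_cons_append_singleton_eq_sum (d : α) (s : List α) :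
    cost M (d :: (s ++ [d])) = ∑ t : Fin (d :: s).length,
      M ((d :: s).get t) ((d :: s).get ⟨((t : ℕ) + 1) % (d :: s).length, Nat.mod_lt _ t.pos⟩) := by
  have htail : (d :: (s ++ [d])).tail = (d :: s).rotate 1 := by simp
  rw [cost, htail, ← List.sum_ofFn]
  congr 1
  apply List.ext_getElem
  · simp
  · intro t _ _
    simp only [List.getElem_zipWith, List.getElem_ofFn, List.get_eq_getElem, List.getElem_rotate]
    congr 1
    grind

def walkCosts (S : Set α) (i k : α) : Set R :=
  {c | ∃ q : List α, (∀ v ∈ q, v ∈ S) ∧ c = cost M (i :: (q ++ [k]))}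

def pathCosts (S : Set α) (i k : α) : Set R :=
  {c | ∃ q : List α, (i :: (q ++ [k])).Nodup ∧ (∀ v ∈ q, v ∈ S) ∧ c = cost M (i :: (q ++ [k]))}

theorem apply_mem_walkCosts (S : Set α) (i k : α) : M i k ∈ walkCosts M S i k :=
  ⟨[], by simp, by simp⟩

end Cost

theorem exists_eq_append_cons_append_cons_of_not_nodup {α : Type*} {l : List α} (hl : ¬ l.Nodup) :
    ∃ (x : List α) (d : α) (s z : List α), l = x ++ d :: (s ++ d :: z) := by
  induction l with
  | nil => exact absurd List.nodup_nil hl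
  | cons a t ih =>
    by_cases ha : a ∈ t
    · obtain ⟨s, z, rfl⟩ := List.append_of_mem ha
      exact ⟨[], a, s, z, rfl⟩
    · obtain ⟨x, d, s, z, rfl⟩ := ih fun ht => hl (List.nodup_cons.2 ⟨ha, ht⟩)
      exact ⟨a :: x, d, s, z, rfl⟩

section Walks

variable {α R : Type*} [AddCommMonoid R] [LinearOrder R] {M : α → α → R}

theorem min_mem_walkCosts_insert {S : Set α} {i v k : α} {a b c : R}
    (ha : a ∈ walkCosts M S i k) (hb : b ∈ walkCosts M S i v) (hc : c ∈ walkCosts M S v k) :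
    min a (b + c) ∈ walkCosts M (insert v S) i k := by
  rcases min_choice a (b + c) with h | h <;> rw [h]
  · obtain ⟨q, hq, rfl⟩ := ha
    exact ⟨q, fun x hx => Set.mem_insert_of_mem v (hq x hx), rfl⟩
  · obtain ⟨q₁, hq₁, rfl⟩ := hb
    obtain ⟨q₂, hq₂, rfl⟩ := hc
    refine ⟨q₁ ++ v :: q₂, fun x hx => ?_, (cost_cons_append_cons_append M i v k q₁ q₂).symm⟩
    simp only [List.mem_append, List.mem_cons] at hx
    rcases hx with hx | rfl | hx
    exacts [Set.mem_insert_of_mem v (hq₁ x hx), Set.mem_insert x S,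
      Set.mem_insert_of_mem v (hq₂ x hx)]

theorem apply_mem_lowerBounds_pathCosts_empty (i k : α) :
    M i k ∈ lowerBounds (pathCosts M ∅ i k) := by
  rintro c ⟨q, -, hq, rfl⟩
  obtain rfl : q = [] := List.eq_nil_iff_forall_not_mem.mpr hq
  simp

end Walks

section NoNegCycle

variable {α R : Type*} [AddCommMonoid R] [LinearOrder R] [IsOrderedAddMonoid R] (M : α → α → R)

def NoNegCycle : Prop := ∀ (d : α) (s : List α), (d :: s).Nodup → 0 ≤ cost M (d :: (s ++ [d]))

variable {M}

theorem NoNegCycle.cost_nonneg_of_head?_eq_getLast? (h : NoNegCycle M) (w : List α)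
    (hw : w.head? = w.getLast?) : 0 ≤ cost M w := by
  induction hlen : w.length using Nat.strong_induction_on generalizing w with
  | _ N ih =>
  cases w with
  | nil => simp
  | cons u t =>
    by_cases ht : t.Nodup
    · obtain rfl | ⟨y, b, rfl⟩ := t.eq_nil_or_concat'
      · simp
      · rw [← List.cons_append, List.getLast?_concat] at hw
        obtain rfl : u = b := Option.some_inj.mp hw
        exact h _ y (ht.perm (List.perm_append_singleton _ y))
    · obtain ⟨x, d, s, z, rfl⟩ := exists_eq_append_cons_append_cons_of_not_nodup ht
      rw [← List.cons_append, cost_remove_loop]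
      refine add_nonneg (ih _ ?_ _ ?_ rfl) (ih _ ?_ _ ?_ rfl)
      · simp [← hlen]
      · simpa [List.getLast?_append, List.getLast?_cons] using hw
      · simp [← hlen]; omega
      · rw [← List.cons_append, List.getLast?_concat]; rfl

theorem NoNegCycle.exists_nodup_sublist_cost_le (h : NoNegCycle M) (w : List α) :
    ∃ w' : List α, w'.Nodup ∧ w'.Sublist w ∧ w'.head? = w.head? ∧ w'.getLast? = w.getLast? ∧
      cost M w' ≤ cost M w := by
  induction hlen : w.length using Nat.strong_induction_on generalizing w with
  | _ N ih =>
  by_cases hw : w.Nodup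
  · exact ⟨w, hw, .refl w, rfl, rfl, le_rfl⟩
  obtain ⟨x, d, s, z, rfl⟩ := exists_eq_append_cons_append_cons_of_not_nodup hw
  obtain ⟨w', hnd, hsub, hhead, hlast, hle⟩ := ih _ (by simp [← hlen]) (x ++ d :: z) rfl
  refine ⟨w', hnd, hsub.trans ?_, hhead.trans ?_, hlast.trans ?_, hle.trans ?_⟩
  · exact ((List.sublist_append_right s (d :: z)).cons d).append_left x
  · simp [List.head?_append]
  · simp [List.getLast?_append, List.getLast?_cons]
  · have hloop : 0 ≤ cost M (d :: (s ++ [d])) :=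
      h.cost_nonneg_of_head?_eq_getLast? _ (by rw [← List.cons_append, List.getLast?_concat]; rfl)
    rw [cost_remove_loop]
    exact le_add_of_nonneg_right hloop

theorem NoNegCycle.exists_mem_pathCosts_le (h : NoNegCycle M) {S : Set α} {i k : α} {a : R}
    (hik : i ≠ k) (ha : a ∈ walkCosts M S i k) : ∃ b ∈ pathCosts M S i k, b ≤ a := by
  obtain ⟨q, hqS, rfl⟩ := ha
  obtain ⟨w, hnd, hsub, hhead, hlast, hle⟩ := h.exists_nodup_sublist_cost_le (i :: (q ++ [k]))
  obtain ⟨r, rfl⟩ : ∃ r, w = i :: r := by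
    cases w with
    | nil => simp at hhead
    | cons a r => exact ⟨r, by simpa using hhead⟩
  obtain rfl | ⟨q', b, rfl⟩ := r.eq_nil_or_concat'
  · rw [List.getLast?_singleton, ← List.cons_append, List.getLast?_concat, Option.some_inj] at hlast
    exact absurd hlast hik
  rw [← List.cons_append, List.getLast?_concat, ← List.cons_append, List.getLast?_concat,
    Option.some_inj] at hlast
  subst hlast
  refine ⟨_, ⟨q', hnd, fun v hv => ?_, rfl⟩, hle⟩
  have hvi : v ≠ i := fun hvi => (List.nodup_cons.mp hnd).1 (by simp [← hvi, hv])
  have hvk : v ≠ b := by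
    rintro rfl
    exact (List.nodup_append.mp (List.nodup_cons.mp hnd).2).2.2 v hv v (by simp) rfl
  have := hsub.subset (List.mem_cons_of_mem _ (List.mem_append_left _ hv))
  simp only [List.mem_cons, List.mem_append, hvi, hvk, false_or, List.not_mem_nil, or_false] at this
  exact hqS v this

theorem NoNegCycle.isLeast_pathCosts (h : NoNegCycle M) {S : Set α} {i k : α} {a : R}
    (hik : i ≠ k) (ha : a ∈ walkCosts M S i k) (hlb : a ∈ lowerBounds (pathCosts M S i k)) :
    IsLeast (pathCosts M S i k) a := by
  obtain ⟨b, hb, hba⟩ := h.exists_mem_pathCosts_le hik ha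
  obtain rfl : b = a := le_antisymm hba (hlb hb)
  exact ⟨hb, hlb⟩

theorem min_mem_lowerBounds_pathCosts_insert {S : Set α} {i v k : α} {a b c : R}
    (ha : a ∈ lowerBounds (pathCosts M S i k)) (hb : b ∈ lowerBounds (pathCosts M S i v))
    (hc : c ∈ lowerBounds (pathCosts M S v k)) :
    min a (b + c) ∈ lowerBounds (pathCosts M (insert v S) i k) := by
  rintro _ ⟨q, hnd, hq, rfl⟩
  by_cases hvq : v ∈ q
  · obtain ⟨q₁, q₂, rfl⟩ := List.append_of_mem hvq
    have hnd₁ : (i :: (q₁ ++ [v])).Nodup := hnd.sublist (by simp)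
    have hnd₂ : (v :: (q₂ ++ [k])).Nodup := hnd.sublist (by simp)
    have hq₁ : ∀ x ∈ q₁, x ∈ S := fun x hx =>
      Set.mem_of_mem_insert_of_ne (hq x (by simp [hx]))
        fun hxv => (List.nodup_append.mp (List.nodup_cons.mp hnd₁).2).2.2 x hx v (by simp) hxv
    have hq₂ : ∀ x ∈ q₂, x ∈ S := fun x hx =>
      Set.mem_of_mem_insert_of_ne (hq x (by simp [hx]))
        fun hxv => (List.nodup_cons.mp hnd₂).1 (by simp [← hxv, hx])
    rw [cost_cons_append_cons_append]
    exact (min_le_right _ _).trans (add_le_add (hb ⟨q₁, hnd₁, hq₁, rfl⟩) (hc ⟨q₂, hnd₂, hq₂, rfl⟩))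
  · have hqS : ∀ x ∈ q, x ∈ S := fun x hx =>
      Set.mem_of_mem_insert_of_ne (hq x hx) fun hxv => hvq (hxv ▸ hx)
    exact (min_le_left _ _).trans (ha ⟨q, hnd, hqS, rfl⟩)

end NoNegCycle

section Matrices

variable {R : Type*} [AddCommMonoid R] [LinearOrder R] {n : ℕ}

def IsFloydWarshallSeq (M : Fin n → Fin n → R) (F : ℕ → Fin n → Fin n → R) : Prop :=
  F 0 = M ∧ ∀ (j : ℕ) (hj : j < n) (i k : Fin n),
    F (j + 1) i k = min (F j i k) (F j i ⟨j, hj⟩ + F j ⟨j, hj⟩ k)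

theorem setOf_val_lt_succ {j : ℕ} (hj : j < n) :
    {v : Fin n | (v : ℕ) < j + 1} = insert ⟨j, hj⟩ {v : Fin n | (v : ℕ) < j} := by
  ext v
  simp only [Set.mem_ofPred_eq, Set.mem_insert_iff, Fin.ext_iff]
  omega

variable {M : Fin n → Fin n → R} {F : ℕ → Fin n → Fin n → R}

theorem IsFloydWarshallSeq.mem_walkCosts (hF : IsFloydWarshallSeq M F) :
    ∀ j ≤ n, ∀ i k, F j i k ∈ walkCosts M {v | (v : ℕ) < j} i k
  | 0, _, i, k => hF.1 ▸ apply_mem_walkCosts M _ i k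
  | j + 1, hj, i, k => by
    have ih := hF.mem_walkCosts j (Nat.le_of_succ_le hj)
    rw [hF.2 j hj, setOf_val_lt_succ hj]
    exact min_mem_walkCosts_insert (ih i k) (ih i _) (ih _ k)

theorem IsFloydWarshallSeq.mem_lowerBounds_pathCosts [IsOrderedAddMonoid R]
    (hF : IsFloydWarshallSeq M F) :
    ∀ j ≤ n, ∀ i k, F j i k ∈ lowerBounds (pathCosts M {v | (v : ℕ) < j} i k)
  | 0, _, i, k => by
    simpa [hF.1] using apply_mem_lowerBounds_pathCosts_empty (M := M) i k
  | j + 1, hj, i, k => by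
    have ih := hF.mem_lowerBounds_pathCosts j (Nat.le_of_succ_le hj)
    rw [hF.2 j hj, setOf_val_lt_succ hj]
    exact min_mem_lowerBounds_pathCosts_insert (ih i k) (ih i _) (ih _ k)

end Matrices

end FloydWarshall

open FloydWarshall

theorem floyd_warshall_correct_general (n : ℕ)
    (M : Fin n → Fin n → ℝ) (F : ℕ → Fin n → Fin n → ℝ)
    (hF0 : F 0 = M)
    (hFstep : ∀ (j : ℕ) (hj : j < n) (i k : Fin n),
      F (j + 1) i k = min (F j i k) (F j i ⟨j, hj⟩ + F j ⟨j, hj⟩ k))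
    (hNoNegCycle : ∀ c : List (Fin n), c ≠ [] → c.Nodup →
      0 ≤ ∑ t : Fin c.length,
        M (c.get t) (c.get ⟨((t : ℕ) + 1) % c.length, Nat.mod_lt _ t.pos⟩))
    (j : ℕ) (hj : j ≤ n) (i k : Fin n) (hik : i ≠ k) :
    IsLeast
      { c : ℝ | ∃ q : List (Fin n),
          (i :: (q ++ [k])).Nodup ∧
          (∀ v ∈ q, (v : ℕ) < j) ∧
          c = (List.zipWith M (i :: (q ++ [k])) (q ++ [k])).sum }
      (F j i k) := by
  have hF : IsFloydWarshallSeq M F := ⟨hF0, hFstep⟩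
  have hcycle : NoNegCycle M := fun d s hds => by
    rw [cost_cons_append_singleton_eq_sum]
    exact hNoNegCycle (d :: s) (List.cons_ne_nil d s) hds
  exact hcycle.isLeast_pathCosts hik (hF.mem_walkCosts j hj i k)
    (hF.mem_lowerBounds_pathCosts j hj i k)

/-- **Theorem 3.2 (correctness of the Floyd–Warshall algorithm).**
Let `M` be an arc-cost matrix on the complete digraph with vertex set `Fin n`,
and let `F` be the Floyd–Warshall matrices: `F 0 = M` and, for `j < n`,
`F (j+1) i k = min (F j i k) (F j i vⱼ + F j vⱼ k)` where `vⱼ = ⟨j, _⟩`.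
If `M` has no negative cycle (for every nonempty list of distinct vertices the
cyclic cost is nonnegative), then for every `j ≤ n` and all `i ≠ k`, the entry
`F j i k` is the least cost of a simple path from `i` to `k` all of whose
intermediate vertices have index `< j`, the cost of a path being the sum of
`M` over consecutive pairs. -/
theorem floyd_warshall_correct (n : ℕ) (hn : 1 ≤ n)
    (M : Fin n → Fin n → ℝ) (F : ℕ → Fin n → Fin n → ℝ)
    (hF0 : F 0 = M)
    (hFstep : ∀ (j : ℕ) (hj : j < n) (i k : Fin n),
      F (j + 1) i k = min (F j i k) (F j i ⟨j, hj⟩ + F j ⟨j, hj⟩ k))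
    (hNoNegCycle : ∀ c : List (Fin n), c ≠ [] → c.Nodup →
      0 ≤ ∑ t : Fin c.length,
        M (c.get t) (c.get ⟨((t : ℕ) + 1) % c.length, Nat.mod_lt _ t.pos⟩))
    (j : ℕ) (hj : j ≤ n) (i k : Fin n) (hik : i ≠ k) :
    IsLeast
      { c : ℝ | ∃ q : List (Fin n),
          (i :: (q ++ [k])).Nodup ∧
          (∀ v ∈ q, (v : ℕ) < j) ∧
          c = (List.zipWith M (i :: (q ++ [k])) (q ++ [k])).sum }
      (F j i k) :=
  floyd_warshall_correct_general n M F hF0 hFstep hNoNegCycle j hj i k hik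
end
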